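/- arXiv:2001.00690 — 3 statements merged into one kernel-verified Lean document; each statement's English description precedes it below -/
import Mathlib

section
/- Let v ∈ H²(𝕋¹) with 𝕋¹ = ℝ/ℤ, let h > 0, z ≤ 0, and set f = (-h²∂ₓ² - z)v. Then ‖v‖²_{L²(𝕋¹)} ≤ (4/h⁴)‖f‖²_{L²(𝕋¹)} + (2/ε)‖v‖²_{L²((-ε,ε))} for any 0 < ε < 1/2. -/
open MeasureTheory Real intervalIntegral

lemma cs_interval (g : ℝ → ℝ) (a b : ℝ) (hab : a ≤ b) (hg : Continuous g) :
    (∫ x in a..b, g x)^2 ≤ (b - a) * ∫ x in a..b, (g x)^2 := by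
  rcases eq_or_lt_of_le hab with rfl | hlt
  · simp
  · set L := b - a with hL
    have hL0 : 0 < L := by simp [hL]; linarith
    set t := (∫ x in a..b, g x) / L with ht
    have hig : IntervalIntegrable g volume a b := hg.intervalIntegrable a b
    have hig2 : IntervalIntegrable (fun x => (g x)^2) volume a b :=
      (hg.pow 2).intervalIntegrable a b
    have key : 0 ≤ ∫ x in a..b, (g x - t)^2 :=
      intervalIntegral.integral_nonneg hab (fun x _ => sq_nonneg _)
    have expand : ∫ x in a..b, (g x - t)^2
        = (∫ x in a..b, (g x)^2) - 2*t*(∫ x in a..b, g x) + t^2 * L := by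
      have : ∀ x, (g x - t)^2 = (g x)^2 - (2*t) * g x + t^2 := by intro x; ring
      simp_rw [this]
      rw [intervalIntegral.integral_add (hig2.sub (hig.const_mul (2*t)))
        (intervalIntegrable_const), intervalIntegral.integral_sub hig2 (hig.const_mul (2*t)),
        intervalIntegral.integral_const_mul, intervalIntegral.integral_const]
      simp [hL]; ring
    rw [expand] at key
    have : t * L = ∫ x in a..b, g x := by rw [ht, div_mul_cancel₀ _ (ne_of_gt hL0)]
    nlinarith [sq_nonneg t]

set_option maxHeartbeats 1600000 in
/-- For `v ∈ H²(𝕋¹)` (encoded as a 1-periodic `C²` function on `ℝ`),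
`h > 0`, `z ≤ 0` and `f = (-h²∂ₓ² - z)v`, one has
`‖v‖²_{L²(𝕋¹)} ≤ (4/h⁴)‖f‖²_{L²(𝕋¹)} + (2/ε)‖v‖²_{L²((-ε,ε))}` for `0 < ε < 1/2`. -/
theorem stmt0 (v : ℝ → ℂ) (hper : Function.Periodic v 1) (hreg : ContDiff ℝ 2 v)
    (h z ε : ℝ) (hh : 0 < h) (hz : z ≤ 0) (hε : 0 < ε) (hε' : ε < 1/2) :
    (∫ x in (0:ℝ)..1, ‖v x‖^2) ≤
      4/h^4 * (∫ x in (0:ℝ)..1, ‖-(h:ℂ)^2 * deriv (deriv v) x - (z:ℂ) * v x‖^2)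
      + 2/ε * (∫ x in (-ε)..ε, ‖v x‖^2) := by
  -- regularity facts
  have hreg' : ContDiff ℝ (1+1) v := by exact_mod_cast hreg
  have hv_diff : Differentiable ℝ v := hreg.differentiable (by norm_num)
  have hw_cd : ContDiff ℝ 1 (deriv v) := (contDiff_succ_iff_deriv.mp hreg').2.2
  have hw_diff : Differentiable ℝ (deriv v) := hw_cd.differentiable one_ne_zero
  have hv_cont : Continuous v := hv_diff.continuous
  have hw_cont : Continuous (deriv v) := hw_diff.continuous
  have hw2_cont : Continuous (deriv (deriv v)) := hw_cd.continuous_deriv le_rfl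
  set w := deriv v with hw
  -- periodicity of the derivative
  have hwper : Function.Periodic w 1 := by
    intro x
    have : v = fun y => v (y + 1) := funext fun y => (hper y).symm
    calc w (x + 1) = deriv (fun y => v (y + 1)) x := (deriv_comp_add_const v 1 x).symm
    _ = w x := by rw [← this]
  -- the source term
  set f : ℝ → ℂ := fun x => -(h:ℂ)^2 * deriv w x - (z:ℂ) * v x with hf
  have hf_cont : Continuous f := by
    fun_prop
  set V := ∫ x in (0:ℝ)..1, ‖v x‖^2 with hV
  set D := ∫ x in (0:ℝ)..1, ‖w x‖^2 with hD
  set F := ∫ x in (0:ℝ)..1, ‖f x‖^2 with hF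
  set A := ∫ x in (-ε)..ε, ‖v x‖^2 with hA
  have hV0 : 0 ≤ V := intervalIntegral.integral_nonneg (by norm_num) (fun x _ => sq_nonneg _)
  have hD0 : 0 ≤ D := intervalIntegral.integral_nonneg (by norm_num) (fun x _ => sq_nonneg _)
  have hF0 : 0 ≤ F := intervalIntegral.integral_nonneg (by norm_num) (fun x _ => sq_nonneg _)
  have hA0 : 0 ≤ A := intervalIntegral.integral_nonneg (by linarith) (fun x _ => sq_nonneg _)
  -- Integration by parts
  have ibp : (∫ x in (0:ℝ)..1, (starRingEnd ℂ) (v x) * deriv w x) = -(D:ℂ) := by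
    have hu : ∀ x ∈ Set.uIcc (0:ℝ) 1, HasDerivAt (fun y => (starRingEnd ℂ) (v y))
        ((starRingEnd ℂ) (w x)) x := fun x _ => (hv_diff x).hasDerivAt.star
    have hvd : ∀ x ∈ Set.uIcc (0:ℝ) 1, HasDerivAt w (deriv w x) x :=
      fun x _ => (hw_diff x).hasDerivAt
    have h1 := intervalIntegral.integral_mul_deriv_eq_deriv_mul hu hvd
      ((continuous_star.comp hw_cont).intervalIntegrable 0 1)
      (hw2_cont.intervalIntegrable 0 1)
    have hb1 : v 1 = v 0 := by simpa using (hper 0)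
    have hb2 : w 1 = w 0 := by simpa using (hwper 0)
    rw [h1, hb1, hb2, sub_self, zero_sub]
    congr 1
    have : ∀ x : ℝ, (starRingEnd ℂ) (w x) * w x = ((‖w x‖^2 : ℝ) : ℂ) := by
      intro x
      rw [mul_comm, Complex.mul_conj']
      norm_cast
    simp_rw [this]
    rw [intervalIntegral.integral_ofReal]
  have hvconj_cont : Continuous (fun x => (starRingEnd ℂ) (v x)) := continuous_star.comp hv_cont
  -- energy identity: ∫ f conj v = h² D - z V (as a real number)
  have energy : (∫ x in (0:ℝ)..1, f x * (starRingEnd ℂ) (v x)) = ((h^2 * D - z * V : ℝ) : ℂ) := by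
    have hint1 : IntervalIntegrable (fun x => -(h:ℂ)^2 * deriv w x * (starRingEnd ℂ) (v x))
        volume 0 1 := by
      apply Continuous.intervalIntegrable
      exact ((continuous_const.mul hw2_cont).mul hvconj_cont)
    have hint2 : IntervalIntegrable (fun x => (z:ℂ) * v x * (starRingEnd ℂ) (v x))
        volume 0 1 := by
      apply Continuous.intervalIntegrable
      exact ((continuous_const.mul hv_cont).mul hvconj_cont)
    have : ∀ x, f x * (starRingEnd ℂ) (v x) =
        -(h:ℂ)^2 * deriv w x * (starRingEnd ℂ) (v x) - (z:ℂ) * v x * (starRingEnd ℂ) (v x) := by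
      intro x; simp [hf]; ring
    simp_rw [this]
    rw [intervalIntegral.integral_sub hint1 hint2]
    have e1 : (∫ x in (0:ℝ)..1, -(h:ℂ)^2 * deriv w x * (starRingEnd ℂ) (v x))
        = ((h^2 * D : ℝ) : ℂ) := by
      have : ∀ x, -(h:ℂ)^2 * deriv w x * (starRingEnd ℂ) (v x)
          = -(h:ℂ)^2 * ((starRingEnd ℂ) (v x) * deriv w x) := by intro x; ring
      simp_rw [this]
      rw [intervalIntegral.integral_const_mul, ibp]
      push_cast
      ring
    have e2 : (∫ x in (0:ℝ)..1, (z:ℂ) * v x * (starRingEnd ℂ) (v x)) = ((z * V : ℝ) : ℂ) := by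
      have : ∀ x : ℝ, (z:ℂ) * v x * (starRingEnd ℂ) (v x) = (z:ℂ) * ((‖v x‖^2 : ℝ):ℂ) := by
        intro x
        rw [mul_assoc, Complex.mul_conj']
        norm_cast
      simp_rw [this]
      rw [intervalIntegral.integral_const_mul, intervalIntegral.integral_ofReal]
      push_cast
      ring
    rw [e1, e2]
    push_cast
    ring
  -- Step 2: h² D ≤ ∫ ‖f‖ ‖v‖
  have hfv_cont : Continuous (fun x => ‖f x‖ * ‖v x‖) := (hf_cont.norm.mul hv_cont.norm)
  have step2 : h^2 * D ≤ ∫ x in (0:ℝ)..1, ‖f x‖ * ‖v x‖ := by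
    have h1 : h^2 * D ≤ h^2 * D - z * V := by nlinarith
    have h2 : h^2 * D - z * V = ‖((h^2 * D - z * V : ℝ) : ℂ)‖ := by
      rw [Complex.norm_real, Real.norm_of_nonneg (by nlinarith [sq_nonneg h])]
    have h3 : ‖∫ x in (0:ℝ)..1, f x * (starRingEnd ℂ) (v x)‖
        ≤ ∫ x in (0:ℝ)..1, ‖f x * (starRingEnd ℂ) (v x)‖ :=
      intervalIntegral.norm_integral_le_integral_norm (by norm_num)
    have h4 : ∀ x : ℝ, ‖f x * (starRingEnd ℂ) (v x)‖ = ‖f x‖ * ‖v x‖ := by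
      intro x; rw [norm_mul, RCLike.norm_conj]
    calc h^2 * D ≤ h^2 * D - z * V := h1
      _ = ‖((h^2 * D - z * V : ℝ) : ℂ)‖ := h2
      _ = ‖∫ x in (0:ℝ)..1, f x * (starRingEnd ℂ) (v x)‖ := by rw [energy]
      _ ≤ ∫ x in (0:ℝ)..1, ‖f x * (starRingEnd ℂ) (v x)‖ := h3
      _ = ∫ x in (0:ℝ)..1, ‖f x‖ * ‖v x‖ := by simp_rw [h4]
  -- Step 3: h⁴ D ≤ F + h⁴/4 V
  have step3 : h^4 * D ≤ F + h^4/4 * V := by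
    have pt : ∀ x ∈ Set.Icc (0:ℝ) 1, h^2 * (‖f x‖ * ‖v x‖)
        ≤ ‖f x‖^2 + h^4/4 * ‖v x‖^2 := by
      intro x _
      nlinarith [sq_nonneg (‖f x‖ - h^2 * ‖v x‖ / 2), sq_nonneg h, norm_nonneg (f x),
        norm_nonneg (v x)]
    have mono := intervalIntegral.integral_mono_on (μ := volume) (by norm_num : (0:ℝ) ≤ 1)
      ((continuous_const.mul hfv_cont).intervalIntegrable 0 1)
      (((hf_cont.norm.pow 2).add (continuous_const.mul (hv_cont.norm.pow 2))).intervalIntegrable 0 1)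
      pt
    simp only [Pi.mul_apply, Pi.add_apply, Pi.pow_apply] at mono
    rw [intervalIntegral.integral_const_mul] at mono
    rw [intervalIntegral.integral_add (f := fun u => ‖f u‖^2) (g := fun u => h^4/4 * ‖v u‖^2) ((hf_cont.norm.pow 2).intervalIntegrable 0 1)
      ((continuous_const.mul (hv_cont.norm.pow 2)).intervalIntegrable 0 1),
      intervalIntegral.integral_const_mul] at mono
    have := mul_le_mul_of_nonneg_left step2 (sq_nonneg h)
    calc h^4 * D = h^2 * (h^2 * D) := by ring
      _ ≤ h^2 * ∫ x in (0:ℝ)..1, ‖f x‖ * ‖v x‖ := this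
      _ ≤ F + h^4/4 * V := mono
  -- Step 4: segment estimate
  have hDper : Function.Periodic (fun x => ‖w x‖^2) 1 := fun x => by simp [hwper x]
  have seg : ∀ a b : ℝ, a ≤ b → b - a ≤ 1 → ‖v b - v a‖^2 ≤ D := by
    intro a b hab hba
    have ftc : ∫ x in a..b, w x = v b - v a :=
      intervalIntegral.integral_deriv_eq_sub (fun x _ => hv_diff x)
        (hw_cont.intervalIntegrable a b)
    have h1 : ‖v b - v a‖ ≤ ∫ x in a..b, ‖w x‖ := by
      rw [← ftc]; exact intervalIntegral.norm_integral_le_integral_norm hab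
    have h2 : (∫ x in a..b, ‖w x‖)^2 ≤ (b - a) * ∫ x in a..b, ‖w x‖^2 :=
      cs_interval _ a b hab hw_cont.norm
    have h3 : ∫ x in a..b, ‖w x‖^2 ≤ D := by
      have hsub : ∫ x in a..b, ‖w x‖^2 ≤ ∫ x in a..(a+1), ‖w x‖^2 :=
        intervalIntegral.integral_mono_interval le_rfl hab (by linarith)
          (Filter.Eventually.of_forall (fun x => sq_nonneg _))
          ((hw_cont.norm.pow 2).intervalIntegrable a (a+1))
      have hper1 : ∫ x in a..(a+1), ‖w x‖^2 = ∫ x in (0:ℝ)..(0+1), ‖w x‖^2 :=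
        hDper.intervalIntegral_add_eq a 0
      rw [hper1] at hsub
      simpa using hsub
    have hI0 : (0:ℝ) ≤ ∫ x in a..b, ‖w x‖^2 :=
      intervalIntegral.integral_nonneg hab (fun x _ => sq_nonneg _)
    have hI1 : (0:ℝ) ≤ ∫ x in a..b, ‖w x‖ :=
      intervalIntegral.integral_nonneg hab (fun x _ => norm_nonneg _)
    nlinarith [norm_nonneg (v b - v a), pow_le_pow_left₀ (norm_nonneg (v b - v a)) h1 2]
  -- pointwise bound
  have ptbd : ∀ x ∈ Set.Icc (0:ℝ) 1, ∀ y ∈ Set.Icc (-ε) ε,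
      ‖v x‖^2 ≤ 2 * ‖v y‖^2 + 2 * D := by
    intro x hx y hy
    obtain ⟨hx0, hx1⟩ := hx
    obtain ⟨hy0, hy1⟩ := hy
    have key : ‖v x - v y‖^2 ≤ D := by
      rcases le_or_gt (x - y) 1 with hc | hc
      · rcases le_total y x with hyx | hxy
        · exact seg y x hyx (by linarith)
        · rw [norm_sub_rev]; exact seg x y hxy (by linarith)
      · have hvy : v (y + 1) = v y := hper y
        rw [← hvy]
        exact seg (y + 1) x (by linarith) (by linarith)
    have htr : ‖v x‖ ≤ ‖v y‖ + ‖v x - v y‖ := by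
      calc ‖v x‖ = ‖v y + (v x - v y)‖ := by ring_nf
        _ ≤ ‖v y‖ + ‖v x - v y‖ := norm_add_le _ _
    have hsq : ‖v x‖^2 ≤ (‖v y‖ + ‖v x - v y‖)^2 := pow_le_pow_left₀ (norm_nonneg _) htr 2
    nlinarith [norm_nonneg (v x - v y), norm_nonneg (v y), sq_nonneg (‖v y‖ - ‖v x - v y‖)]
  -- Step 5: integrate over y
  have step5 : ∀ x ∈ Set.Icc (0:ℝ) 1, ‖v x‖^2 ≤ A/ε + 2 * D := by
    intro x hx
    have mono := intervalIntegral.integral_mono_on (μ := volume) (by linarith : -ε ≤ ε)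
      (intervalIntegrable_const)
      (((continuous_const.mul (hv_cont.norm.pow 2)).add continuous_const).intervalIntegrable (-ε) ε)
      (fun y hy => ptbd x hx y hy)
    rw [intervalIntegral.integral_const] at mono
    simp only [Pi.mul_apply, Pi.add_apply, Pi.pow_apply] at mono
    rw [intervalIntegral.integral_add (f := fun u => 2 * ‖v u‖^2) (g := fun _ => 2 * D) ((continuous_const.mul (hv_cont.norm.pow 2)).intervalIntegrable _ _)
      (intervalIntegrable_const), intervalIntegral.integral_const_mul,
      intervalIntegral.integral_const] at mono
    simp only [smul_eq_mul, sub_neg_eq_add] at mono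
    -- mono : (ε + ε) * ‖v x‖^2 ≤ 2 * A + (ε + ε) * (2*D)
    have h2ε : (0:ℝ) < 2 * ε := by linarith
    have hrw : ‖v x‖^2 = (2*ε*‖v x‖^2)/(2*ε) := by field_simp
    rw [hrw, div_le_iff₀ h2ε]
    have rhs_eq : (A/ε + 2*D)*(2*ε) = 2*A + (ε + ε)*(2*D) := by field_simp; ring
    rw [rhs_eq]
    nlinarith [mono]
  -- Step 6: integrate over x
  have step6 : V ≤ A/ε + 2*D := by
    have mono := intervalIntegral.integral_mono_on (μ := volume) (by norm_num : (0:ℝ) ≤ 1)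
      ((hv_cont.norm.pow 2).intervalIntegrable 0 1) intervalIntegrable_const step5
    rw [intervalIntegral.integral_const] at mono
    simpa using mono
  -- conclusion
  have h4 : (0:ℝ) < h^4 := by positivity
  have s6' : V * ε ≤ A + 2*D*ε := by
    have hm := mul_le_mul_of_nonneg_right step6 (le_of_lt hε)
    calc V * ε ≤ (A/ε + 2*D)*ε := hm
      _ = A + 2*D*ε := by rw [add_mul, div_mul_cancel₀ _ (ne_of_gt hε)]
  have hfin : V * (h^4*ε) ≤ (4/h^4*F + 2/ε*A) * (h^4*ε) := by
    have gen : ∀ a b : ℝ, (4/h^4*a + 2/ε*b) * (h^4*ε) = 4*a*ε + 2*b*h^4 := by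
      intro a b
      field_simp
    have expand := gen F A
    rw [expand]
    nlinarith [mul_le_mul_of_nonneg_right s6' (le_of_lt h4),
      mul_le_mul_of_nonneg_right step3 (le_of_lt hε)]
  exact le_of_mul_le_mul_right hfin (mul_pos h4 hε)
end

section
/- Let η ∼ (p,q) and η′ ∼ (p′,q′) be two distinct ε-rational directions with p,p′ ≥ 1, 0 < q < p, 0 < q′ < p′, gcd(p,q) = gcd(p′,q′) = 1, and L_η ≤ L_{η′}. If |arg η - arg η′| ≤ ε/(12 L_η), then L_{η′} > 6/ε; in particular, two distinct ε-rational directions (with L² < 32/ε² and ε ≪ 1) satisfy |arg η - arg η′| > ε/(12 L_η). -/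
set_option maxHeartbeats 1000000


open Real

lemma tan_lip_aux {a b : ℝ} (ha : a ∈ Set.Icc 0 (π/4)) (hb : b ∈ Set.Icc 0 (π/4)) :
    |Real.tan a - Real.tan b| ≤ 2 * |a - b| := by
  have hconv : Convex ℝ (Set.Icc (0:ℝ) (π/4)) := convex_Icc _ _
  have hpi : (0:ℝ) < π := Real.pi_pos
  have hcos : ∀ x ∈ Set.Icc (0:ℝ) (π/4), 0 < Real.cos x := by
    intro x hx
    exact Real.cos_pos_of_mem_Ioo ⟨by linarith [hx.1], by linarith [hx.2]⟩
  have hder : ∀ x ∈ Set.Icc (0:ℝ) (π/4),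
      HasDerivWithinAt Real.tan (1 / Real.cos x ^ 2) (Set.Icc 0 (π/4)) x := fun x hx =>
    (Real.hasDerivAt_tan (hcos x hx).ne').hasDerivWithinAt
  have hbound : ∀ x ∈ Set.Icc (0:ℝ) (π/4), ‖1 / Real.cos x ^ 2‖ ≤ 2 := by
    intro x hx
    have hc := hcos x hx
    have h1 : 1 / Real.cos x ^ 2 = 1 + Real.tan x ^ 2 := by
      rw [← Real.inv_one_add_tan_sq hc.ne', one_div, inv_inv]
    have htn : 0 ≤ Real.tan x := Real.tan_nonneg_of_nonneg_of_le_pi_div_two hx.1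
      (by linarith [hx.2])
    have htle : Real.tan x ≤ 1 := by
      rcases eq_or_lt_of_le hx.2 with h | h
      · rw [h, Real.tan_pi_div_four]
      · have := Real.tan_lt_tan_of_nonneg_of_lt_pi_div_two hx.1 (by linarith) h
        rw [Real.tan_pi_div_four] at this; linarith
    rw [h1, Real.norm_eq_abs, abs_of_nonneg (by positivity)]
    nlinarith
  have := hconv.norm_image_sub_le_of_norm_hasDerivWithin_le hder hbound hb ha
  simpa [Real.norm_eq_abs] using this

lemma arg_mem_aux {p q : ℤ} (hp : 1 ≤ p) (hq0 : 0 < q) (hqp : q < p) :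
    Complex.arg ((p:ℂ) + (q:ℂ) * Complex.I) ∈ Set.Icc 0 (π/4) ∧
      Real.tan (Complex.arg ((p:ℂ) + (q:ℂ) * Complex.I)) = (q:ℝ) / p := by
  set z : ℂ := (p:ℂ) + (q:ℂ) * Complex.I with hz
  have hre : z.re = (p:ℝ) := by simp [hz]
  have him : z.im = (q:ℝ) := by simp [hz]
  have hpR : (0:ℝ) < p := by exact_mod_cast hp.trans_lt' (by norm_num)
  have hqR : (0:ℝ) < q := by exact_mod_cast hq0
  have hqpR : (q:ℝ) < p := by exact_mod_cast hqp
  have hpi : (0:ℝ) < π := Real.pi_pos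
  have htan : Real.tan z.arg = (q:ℝ) / p := by
    rw [Complex.tan_arg, hre, him]
  have h0 : 0 ≤ z.arg := Complex.arg_nonneg_iff.2 (by rw [him]; exact hqR.le)
  have hlt : z.arg < π/2 := Complex.arg_lt_pi_div_two_iff.2 (Or.inl (by rw [hre]; exact hpR))
  have hle : z.arg ≤ π/4 := by
    by_contra h
    push_neg at h
    have := Real.tan_lt_tan_of_nonneg_of_lt_pi_div_two (by linarith) hlt h
    rw [Real.tan_pi_div_four, htan] at this
    rw [lt_div_iff₀ hpR] at this
    linarith
  exact ⟨⟨h0, hle⟩, htan⟩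

/-- Let `η ∼ (p,q)`, `η′ ∼ (p′,q′)` be distinct `ε`-rational directions
with `p,p′ ≥ 1`, `0 < q < p`, `0 < q′ < p′`, both pairs coprime, and
`L_η = √(p²+q²) ≤ L_{η′} = √(p′²+q′²)`. Then `|arg η - arg η′| ≤ ε/(12 L_η)` forces
`L_{η′} > 6/ε`; in particular `|arg η - arg η′| > ε/(12 L_η)`. Both directions lie in
the open first octant, so their angles are given by `Complex.arg`. -/
theorem stmt9 (ε : ℝ) (p q p' q' : ℤ) (hε : 0 < ε)
    (hp : 1 ≤ p) (hq0 : 0 < q) (hqp : q < p) (hq'0 : 0 < q') (hq'p' : q' < p')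
    (hcop : Int.gcd p q = 1) (hcop' : Int.gcd p' q' = 1)
    (hdist : (p, q) ≠ (p', q'))
    (hrat : (p:ℝ)^2 + (q:ℝ)^2 < 32/ε^2) (hrat' : (p':ℝ)^2 + (q':ℝ)^2 < 32/ε^2)
    (hL : Real.sqrt ((p:ℝ)^2 + (q:ℝ)^2) ≤ Real.sqrt ((p':ℝ)^2 + (q':ℝ)^2)) :
    (|Complex.arg ((p:ℂ) + (q:ℂ) * Complex.I) - Complex.arg ((p':ℂ) + (q':ℂ) * Complex.I)|
        ≤ ε / (12 * Real.sqrt ((p:ℝ)^2 + (q:ℝ)^2))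
      → Real.sqrt ((p':ℝ)^2 + (q':ℝ)^2) > 6/ε)
    ∧ |Complex.arg ((p:ℂ) + (q:ℂ) * Complex.I) - Complex.arg ((p':ℂ) + (q':ℂ) * Complex.I)|
        > ε / (12 * Real.sqrt ((p:ℝ)^2 + (q:ℝ)^2)) := by
  have hp' : 1 ≤ p' := hq'0.trans hq'p'
  have hpR : (0:ℝ) < p := by exact_mod_cast lt_of_lt_of_le zero_lt_one hp
  have hqR : (0:ℝ) < q := by exact_mod_cast hq0
  have hp'R : (0:ℝ) < p' := by exact_mod_cast lt_of_lt_of_le zero_lt_one hp'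
  have hq'R : (0:ℝ) < q' := by exact_mod_cast hq'0
  set L := Real.sqrt ((p:ℝ)^2 + (q:ℝ)^2) with hLdef
  set L' := Real.sqrt ((p':ℝ)^2 + (q':ℝ)^2) with hL'def
  have hL0 : 0 < L := Real.sqrt_pos.2 (by positivity)
  have hL'0 : 0 < L' := Real.sqrt_pos.2 (by positivity)
  have hLsq : L^2 = (p:ℝ)^2 + (q:ℝ)^2 := Real.sq_sqrt (by positivity)
  have hL'sq : L'^2 = (p':ℝ)^2 + (q':ℝ)^2 := Real.sq_sqrt (by positivity)
  have hpL : (p:ℝ) < L := by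
    have : (p:ℝ)^2 < L^2 := by rw [hLsq]; nlinarith
    nlinarith
  have hp'L' : (p':ℝ) ≤ L' := by
    have : (p':ℝ)^2 ≤ L'^2 := by rw [hL'sq]; nlinarith
    nlinarith
  obtain ⟨hmem, htan⟩ := arg_mem_aux hp hq0 hqp
  obtain ⟨hmem', htan'⟩ := arg_mem_aux hp' hq'0 hq'p'
  -- the cross determinant is a nonzero integer
  have hcross : q * p' - q' * p ≠ 0 := by
    intro h
    have heq : q * p' = q' * p := by linarith [sub_eq_zero.mp h]
    have hc : IsCoprime p q := Int.isCoprime_iff_gcd_eq_one.2 hcop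
    have hc' : IsCoprime p' q' := Int.isCoprime_iff_gcd_eq_one.2 hcop'
    have h1 : p ∣ p' := hc.dvd_of_dvd_mul_left ⟨q', by linarith⟩
    have h2 : p' ∣ p := hc'.dvd_of_dvd_mul_left ⟨q, by linarith⟩
    have hpp' : p = p' := Int.dvd_antisymm (by linarith) (by linarith) h1 h2
    have hqq' : q = q' := by
      have : q * p = q' * p := by rw [hpp'] at heq ⊢; exact heq
      exact mul_right_cancel₀ (by omega) this
    exact hdist (by rw [hpp', hqq'])
  have hcrossR : (1:ℝ) ≤ |(q:ℝ) * p' - (q':ℝ) * p| := by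
    have h1 : 1 ≤ |q * p' - q' * p| := Int.one_le_abs hcross
    have : (1:ℝ) ≤ (|q * p' - q' * p| : ℤ) := by exact_mod_cast h1
    simpa [abs_of_nonneg, Int.cast_abs] using this
  -- key implication
  have key : |Complex.arg ((p:ℂ) + (q:ℂ) * Complex.I)
      - Complex.arg ((p':ℂ) + (q':ℂ) * Complex.I)| ≤ ε / (12 * L) → L' > 6/ε := by
    intro h
    have hlip := tan_lip_aux hmem hmem'
    rw [htan, htan'] at hlip
    have hdiff : |(q:ℝ)/p - (q':ℝ)/p'| = |(q:ℝ) * p' - (q':ℝ) * p| / (p * p') := by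
      rw [div_sub_div _ _ hpR.ne' hp'R.ne', abs_div, abs_of_pos (mul_pos hpR hp'R),
        mul_comm (p:ℝ) (q':ℝ)]
    have hlow : 1 / ((p:ℝ) * p') ≤ |(q:ℝ)/p - (q':ℝ)/p'| := by
      rw [hdiff]
      exact div_le_div_of_nonneg_right hcrossR (by positivity) |>.trans_eq rfl
    have hup : |(q:ℝ)/p - (q':ℝ)/p'| ≤ 2 * (ε / (12 * L)) :=
      hlip.trans (by linarith [mul_le_mul_of_nonneg_left h (by norm_num : (0:ℝ) ≤ 2)])
    have hchain : 1 / ((p:ℝ) * p') ≤ ε / (6 * L) := by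
      have : 2 * (ε / (12 * L)) = ε / (6 * L) := by field_simp; ring
      linarith [hlow.trans hup, this.symm.le, this.le]
    -- 6 L ≤ ε p p'
    have h6L : 6 * L ≤ ε * ((p:ℝ) * p') := by
      rw [div_le_div_iff₀ (by positivity) (by positivity)] at hchain
      linarith
    have hεp' : 6 < ε * p' := by
      by_contra hc
      push_neg at hc
      have h1 : 6 * (p:ℝ) < ε * ((p:ℝ) * p') := by nlinarith
      have h2 : ε * ((p:ℝ) * p') ≤ 6 * p := by nlinarith
      linarith
    have : 6/ε < (p':ℝ) := by
      rw [div_lt_iff₀ hε]; linarith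
    linarith
  refine ⟨key, ?_⟩
  by_contra h
  push_neg at h
  have hL'big := key h
  have h6 : (0:ℝ) < 6/ε := by positivity
  have hinv : (0:ℝ) < (ε^2)⁻¹ := by positivity
  have h1 : (6/ε)^2 < L'^2 := by nlinarith
  have h2 : (6/ε)^2 = 36 * (ε^2)⁻¹ := by rw [div_pow]; ring
  have h3 : L'^2 < 32 * (ε^2)⁻¹ := by
    rw [hL'sq]; calc (p':ℝ)^2 + (q':ℝ)^2 < 32/ε^2 := hrat'
      _ = 32 * (ε^2)⁻¹ := by rw [div_eq_mul_inv]
  linarith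
end

section
/- Suppose for all u ∈ H²(𝕋²) and 0 < h < h₀ = ε^{16+δ} one has ‖u‖_{L²(𝕋²)} ≤ Cε⁻⁴‖u‖_{L²(Ω_ε)} + Cε⁻²h⁻²‖(-h²Δ-1)u‖_{L²(𝕋²)}. Then there exists C′ such that for every u₀ ∈ L²(𝕋²) with u₀ = Π_{>h₀⁻¹}u₀ (spectral projection of √(-Δ) onto frequencies > h₀⁻¹), ‖u₀‖²_{L²(𝕋²)} ≤ C′ε⁻⁸ ∫₀^{1/(2π)} ‖e^{itΔ}u₀‖²_{L²(Ω_ε)} dt. -/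
open MeasureTheory Real


noncomputable def EE (k : ℤ × ℤ) (p : ℝ × ℝ) : ℂ :=
  Complex.exp (2*π*Complex.I*((k.1:ℝ)*p.1 + (k.2:ℝ)*p.2))

lemma contEE (k : ℤ × ℤ) : Continuous (EE k) := by
  unfold EE; fun_prop

lemma int1d (n : ℤ) :
    ∫ x in Set.Icc (0:ℝ) 1, Complex.exp (2*π*Complex.I*(n:ℝ)*x) =
      if n = 0 then 1 else 0 := by
  rw [MeasureTheory.integral_Icc_eq_integral_Ioc,
    ← intervalIntegral.integral_of_le (by norm_num : (0:ℝ) ≤ 1)]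
  by_cases hn : n = 0
  · simp [hn]
  · have hc : (2*π*Complex.I*(n:ℝ) : ℂ) ≠ 0 := by
      simp [Real.pi_ne_zero, Complex.I_ne_zero, Complex.ofReal_ne_zero, hn]
    rw [integral_exp_mul_complex hc]
    have h1 : Complex.exp (2*π*Complex.I*(n:ℝ) * (1:ℝ)) = 1 := by
      rw [show (2*π*Complex.I*(n:ℝ) * (1:ℝ) : ℂ) = (n:ℤ) * (2*π*Complex.I) by push_cast; ring]
      exact Complex.exp_int_mul_two_pi_mul_I n
    rw [h1]; simp [hn]


lemma intT (n : ℤ) :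
    ∫ t in (0:ℝ)..(1/(2*π)), Complex.exp (4*π^2*(n:ℝ)*Complex.I*t) =
      if n = 0 then ((1/(2*π) : ℝ) : ℂ) else 0 := by
  by_cases hn : n = 0
  · simp [hn, Complex.real_smul]
  · have hc : (4*π^2*(n:ℝ)*Complex.I : ℂ) ≠ 0 := by
      simp [Real.pi_ne_zero, Complex.I_ne_zero, Complex.ofReal_ne_zero, hn]
    rw [integral_exp_mul_complex hc]
    have h1 : Complex.exp (4*π^2*(n:ℝ)*Complex.I * ((1/(2*π):ℝ):ℂ)) = 1 := by
      rw [show (4*π^2*(n:ℝ)*Complex.I * ((1/(2*π):ℝ):ℂ) : ℂ) = (n:ℤ) * (2*π*Complex.I) by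
        have hπc : (π:ℂ) ≠ 0 := Complex.ofReal_ne_zero.mpr Real.pi_ne_zero
        push_cast
        field_simp
        ring]
      exact Complex.exp_int_mul_two_pi_mul_I n
    rw [h1]; simp [hn]

lemma EE_mul_conj (k l : ℤ × ℤ) (p : ℝ × ℝ) :
    EE k p * (starRingEnd ℂ) (EE l p) =
      Complex.exp (2*π*Complex.I*((k.1 - l.1 : ℤ):ℝ)*p.1)
        * Complex.exp (2*π*Complex.I*((k.2 - l.2 : ℤ):ℝ)*p.2) := by
  unfold EE
  rw [← Complex.exp_conj, ← Complex.exp_add, ← Complex.exp_add]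
  congr 1
  simp only [map_mul, map_add, Complex.conj_I, Complex.conj_ofReal, map_ofNat]
  push_cast
  ring

lemma orth (k l : ℤ × ℤ) :
    (∫ p in Set.Icc ((0:ℝ), (0:ℝ)) (1, 1), EE k p * (starRingEnd ℂ) (EE l p)) =
      if k = l then 1 else 0 := by
  have hIcc : Set.Icc ((0:ℝ), (0:ℝ)) ((1:ℝ), (1:ℝ)) =
      Set.Icc (0:ℝ) 1 ×ˢ Set.Icc (0:ℝ) 1 := (Set.Icc_prod_eq _ _)
  rw [MeasureTheory.integral_congr_ae (Filter.Eventually.of_forall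
    (fun p => EE_mul_conj k l p)), hIcc, Measure.volume_eq_prod,
    setIntegral_prod_mul (fun x : ℝ => Complex.exp (2*π*Complex.I*((k.1 - l.1 : ℤ):ℝ)*x))
      (fun y : ℝ => Complex.exp (2*π*Complex.I*((k.2 - l.2 : ℤ):ℝ)*y)), int1d, int1d]
  rcases eq_or_ne k l with h | h
  · simp [h]
  · have : k.1 - l.1 ≠ 0 ∨ k.2 - l.2 ≠ 0 := by
      by_contra hcon
      push_neg at hcon
      exact h (Prod.ext (by omega) (by omega))
    rcases this with h1 | h1 <;> simp [h1, h]

lemma contConjEE (l : ℤ × ℤ) : Continuous (fun p => (starRingEnd ℂ) (EE l p)) :=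
  Complex.continuous_conj.comp (contEE l)

lemma normsq_re (z : ℂ) : ‖z‖^2 = (z * (starRingEnd ℂ) z).re := by
  rw [Complex.mul_conj]
  simp [Complex.sq_norm]

lemma compactIcc2 : IsCompact (Set.Icc ((0:ℝ), (0:ℝ)) ((1:ℝ), (1:ℝ))) := isCompact_Icc

/-- Generic L² computation on a finite-measure set with an "orthogonality matrix". -/
lemma integral_normSq_sum {s : Set (ℝ × ℝ)} (hs : MeasurableSet s)
    (hfin : ∀ g : ℝ × ℝ → ℂ, Continuous g → IntegrableOn g s)
    (T : Finset (ℤ × ℤ)) (d : ℤ × ℤ → ℂ) :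
    (∫ p in s, ‖∑ k ∈ T, d k * EE k p‖^2) =
      (∑ k ∈ T, ∑ l ∈ T, (d k * (starRingEnd ℂ) (d l)) *
        ∫ p in s, EE k p * (starRingEnd ℂ) (EE l p)).re := by
  have hcont : Continuous (fun p => ∑ k ∈ T, d k * EE k p) := by
    exact continuous_finset_sum _ (fun k _ => continuous_const.mul (contEE k))
  have hint : IntegrableOn (fun p => (∑ k ∈ T, d k * EE k p) *
      (starRingEnd ℂ) (∑ k ∈ T, d k * EE k p)) s :=
    hfin _ (hcont.mul (Complex.continuous_conj.comp hcont))
  calc (∫ p in s, ‖∑ k ∈ T, d k * EE k p‖^2)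
      = ∫ p in s, ((∑ k ∈ T, d k * EE k p) * (starRingEnd ℂ) (∑ k ∈ T, d k * EE k p)).re := by
        simp only [normsq_re]
    _ = (∫ p in s, (∑ k ∈ T, d k * EE k p) * (starRingEnd ℂ) (∑ k ∈ T, d k * EE k p)).re :=
        integral_re hint
    _ = (∑ k ∈ T, ∑ l ∈ T, (d k * (starRingEnd ℂ) (d l)) *
        ∫ p in s, EE k p * (starRingEnd ℂ) (EE l p)).re := by
        congr 1
        have expand : ∀ p : ℝ × ℝ, (∑ k ∈ T, d k * EE k p) *
            (starRingEnd ℂ) (∑ k ∈ T, d k * EE k p) =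
            ∑ k ∈ T, ∑ l ∈ T, (d k * (starRingEnd ℂ) (d l)) *
              (EE k p * (starRingEnd ℂ) (EE l p)) := by
          intro p
          rw [map_sum, Finset.sum_mul_sum]
          refine Finset.sum_congr rfl fun k _ => Finset.sum_congr rfl fun l _ => ?_
          simp only [map_mul]
          ring
        rw [MeasureTheory.integral_congr_ae (Filter.Eventually.of_forall expand),
          MeasureTheory.integral_finset_sum]
        · refine Finset.sum_congr rfl fun k _ => ?_
          rw [MeasureTheory.integral_finset_sum]
          · exact Finset.sum_congr rfl fun l _ => integral_const_mul _ _
          · exact fun l _ => (hfin _ (continuous_const.mul ((contEE k).mul (contConjEE l))))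
        · intro k _
          refine (hfin _ ?_)
          exact continuous_finset_sum _ (fun l _ => continuous_const.mul
            ((contEE k).mul (contConjEE l)))

lemma parseval (T : Finset (ℤ × ℤ)) (d : ℤ × ℤ → ℂ) :
    (∫ p in Set.Icc ((0:ℝ), (0:ℝ)) (1, 1), ‖∑ k ∈ T, d k * EE k p‖^2) =
      ∑ k ∈ T, ‖d k‖^2 := by
  rw [integral_normSq_sum measurableSet_Icc
    (fun g hg => hg.locallyIntegrable.integrableOn_isCompact compactIcc2) T d]
  have : ∀ k ∈ T, ∑ l ∈ T, (d k * (starRingEnd ℂ) (d l)) *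
      (if k = l then (1:ℂ) else 0) = d k * (starRingEnd ℂ) (d k) := by
    intro k hk
    rw [Finset.sum_eq_single k]
    · simp
    · intro l _ hlk; rw [if_neg (Ne.symm hlk), mul_zero]
    · intro h; exact absurd hk h
  simp only [orth]
  rw [Finset.sum_congr rfl this, Complex.re_sum]
  refine Finset.sum_congr rfl fun k _ => ?_
  rw [← normsq_re]



/-- Generic expansion of an L² norm of a finite sum. -/
lemma normSq_integral_expand {s : Set (ℝ × ℝ)}
    (hfin : ∀ g : ℝ × ℝ → ℂ, Continuous g → IntegrableOn g s)
    {ι : Type} [DecidableEq ι] (T : Finset ι) (F : ι → ℝ × ℝ → ℂ)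
    (hF : ∀ i, Continuous (F i)) :
    (∫ p in s, ‖∑ i ∈ T, F i p‖^2) =
      (∑ i ∈ T, ∑ j ∈ T, ∫ p in s, F i p * (starRingEnd ℂ) (F j p)).re := by
  have hcont : Continuous (fun p => ∑ i ∈ T, F i p) :=
    continuous_finset_sum _ (fun i _ => hF i)
  have hconj : ∀ i : ι, Continuous (fun p => (starRingEnd ℂ) (F i p)) :=
    fun i => Complex.continuous_conj.comp (hF i)
  have hint : IntegrableOn (fun p => (∑ i ∈ T, F i p) *
      (starRingEnd ℂ) (∑ i ∈ T, F i p)) s :=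
    hfin _ (hcont.mul (Complex.continuous_conj.comp hcont))
  calc (∫ p in s, ‖∑ i ∈ T, F i p‖^2)
      = ∫ p in s, ((∑ i ∈ T, F i p) * (starRingEnd ℂ) (∑ i ∈ T, F i p)).re := by
        simp only [normsq_re]
    _ = (∫ p in s, (∑ i ∈ T, F i p) * (starRingEnd ℂ) (∑ i ∈ T, F i p)).re :=
        integral_re hint
    _ = (∑ i ∈ T, ∑ j ∈ T, ∫ p in s, F i p * (starRingEnd ℂ) (F j p)).re := by
        congr 1
        have expand : ∀ p : ℝ × ℝ, (∑ i ∈ T, F i p) * (starRingEnd ℂ) (∑ i ∈ T, F i p) =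
            ∑ i ∈ T, ∑ j ∈ T, F i p * (starRingEnd ℂ) (F j p) := by
          intro p
          rw [map_sum, Finset.sum_mul_sum]
        rw [MeasureTheory.integral_congr_ae (Filter.Eventually.of_forall expand),
          MeasureTheory.integral_finset_sum]
        · exact Finset.sum_congr rfl fun i _ => MeasureTheory.integral_finset_sum _
            (fun j _ => hfin _ ((hF i).mul (hconj j)))
        · exact fun i _ => hfin _ (continuous_finset_sum _
            (fun j _ => (hF i).mul (hconj j)))

lemma phi_mul_conj (m m' : ℤ) (t : ℝ) :
    Complex.exp (-(4*π^2*(m:ℝ)*Complex.I*t)) *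
      (starRingEnd ℂ) (Complex.exp (-(4*π^2*(m':ℝ)*Complex.I*t))) =
      Complex.exp (4*π^2*((m'-m : ℤ):ℝ)*Complex.I*t) := by
  rw [← Complex.exp_conj, ← Complex.exp_add]
  congr 1
  simp only [map_neg, map_mul, map_pow, map_ofNat, Complex.conj_I, Complex.conj_ofReal]
  push_cast
  ring

lemma timeOrth {s : Set (ℝ × ℝ)}
    (hfin : ∀ g : ℝ × ℝ → ℂ, Continuous g → IntegrableOn g s)
    (M : Finset ℤ) (g : ℤ → ℝ × ℝ → ℂ) (hg : ∀ m, Continuous (g m)) :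
    (∫ t in (0:ℝ)..(1/(2*π)), ∫ p in s, ‖∑ m ∈ M, g m p *
        Complex.exp (-(4*π^2*(m:ℝ)*Complex.I*t))‖^2)
      = (1/(2*π)) * ∑ m ∈ M, ∫ p in s, ‖g m p‖^2 := by
  set B : ℤ → ℤ → ℂ := fun m m' => ∫ p in s, g m p * (starRingEnd ℂ) (g m' p) with hB
  have hconj : ∀ m : ℤ, Continuous (fun p => (starRingEnd ℂ) (g m p)) :=
    fun m => Complex.continuous_conj.comp (hg m)
  have step1 : ∀ t : ℝ, (∫ p in s, ‖∑ m ∈ M, g m p *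
      Complex.exp (-(4*π^2*(m:ℝ)*Complex.I*t))‖^2) =
      (∑ m ∈ M, ∑ m' ∈ M,
        Complex.exp (4*π^2*((m'-m : ℤ):ℝ)*Complex.I*t) * B m m').re := by
    intro t
    rw [normSq_integral_expand hfin M
      (fun m p => g m p * Complex.exp (-(4*π^2*(m:ℝ)*Complex.I*t)))
      (fun m => (hg m).mul continuous_const)]
    congr 1
    refine Finset.sum_congr rfl fun m _ => Finset.sum_congr rfl fun m' _ => ?_
    have ptwise : ∀ p : ℝ × ℝ,
        (g m p * Complex.exp (-(4*π^2*(m:ℝ)*Complex.I*t))) *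
          (starRingEnd ℂ) (g m' p * Complex.exp (-(4*π^2*(m':ℝ)*Complex.I*t))) =
        Complex.exp (4*π^2*((m'-m : ℤ):ℝ)*Complex.I*t) *
          (g m p * (starRingEnd ℂ) (g m' p)) := by
      intro p
      rw [map_mul, ← phi_mul_conj m m' t]
      ring
    rw [MeasureTheory.integral_congr_ae (Filter.Eventually.of_forall ptwise),
      integral_const_mul]
  have hle : (0:ℝ) ≤ 1/(2*π) := by positivity
  have hHcont : ∀ m m' : ℤ, Continuous (fun t : ℝ =>
      Complex.exp (4*π^2*((m'-m : ℤ):ℝ)*Complex.I*t) * B m m') := by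
    intro m m'; fun_prop
  calc (∫ t in (0:ℝ)..(1/(2*π)), ∫ p in s, ‖∑ m ∈ M, g m p *
        Complex.exp (-(4*π^2*(m:ℝ)*Complex.I*t))‖^2)
      = ∫ t in (0:ℝ)..(1/(2*π)), (∑ m ∈ M, ∑ m' ∈ M,
          Complex.exp (4*π^2*((m'-m : ℤ):ℝ)*Complex.I*t) * B m m').re := by
        simp only [step1]
    _ = (∫ t in (0:ℝ)..(1/(2*π)), ∑ m ∈ M, ∑ m' ∈ M,
          Complex.exp (4*π^2*((m'-m : ℤ):ℝ)*Complex.I*t) * B m m').re := by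
        rw [intervalIntegral.integral_of_le hle, intervalIntegral.integral_of_le hle]
        exact integral_re ((continuous_finset_sum _ (fun m _ => continuous_finset_sum _
          (fun m' _ => hHcont m m'))).locallyIntegrable.integrableOn_isCompact
            isCompact_Icc |>.mono_set Set.Ioc_subset_Icc_self)
    _ = (∑ m ∈ M, ∑ m' ∈ M, (if m' - m = 0 then ((1/(2*π):ℝ):ℂ) else 0) * B m m').re := by
        congr 1
        rw [intervalIntegral.integral_finset_sum
          (f := fun m t => ∑ m' ∈ M, Complex.exp (4*π^2*((m'-m : ℤ):ℝ)*Complex.I*t) * B m m')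
          (fun m _ => (continuous_finset_sum M
            (fun m' _ => hHcont m m')).intervalIntegrable _ _)]
        refine Finset.sum_congr rfl fun m _ => ?_
        rw [intervalIntegral.integral_finset_sum
          (f := fun m' t => Complex.exp (4*π^2*((m'-m : ℤ):ℝ)*Complex.I*t) * B m m')
          (fun m' _ => (hHcont m m').intervalIntegrable _ _)]
        refine Finset.sum_congr rfl fun m' _ => ?_
        rw [intervalIntegral.integral_mul_const, intT]
    _ = (1/(2*π)) * ∑ m ∈ M, ∫ p in s, ‖g m p‖^2 := by
        have diag : ∀ m ∈ M, ∑ m' ∈ M, (if m' - m = 0 then ((1/(2*π):ℝ):ℂ) else 0)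
            * B m m' = ((1/(2*π):ℝ):ℂ) * B m m := by
          intro m hm
          rw [Finset.sum_eq_single m]
          · simp
          · intro m' _ hne; rw [if_neg (by omega), zero_mul]
          · intro h; exact absurd hm h
        rw [Finset.sum_congr rfl diag, Complex.re_sum, Finset.mul_sum]
        refine Finset.sum_congr rfl fun m _ => ?_
        rw [Complex.re_ofReal_mul]
        congr 1
        have : (∫ p in s, ‖g m p‖^2) = (B m m).re := by
          calc (∫ p in s, ‖g m p‖^2)
              = ∫ p in s, (g m p * (starRingEnd ℂ) (g m p)).re := by simp only [normsq_re]
            _ = (B m m).re := integral_re (hfin _ ((hg m).mul (hconj m)))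
        rw [this]

/-- suppose the semiclassical observability estimate
`‖u‖_{L²(𝕋²)} ≤ Cε⁻⁴‖u‖_{L²(Ω_ε)} + Cε⁻²h⁻²‖(-h²Δ-1)u‖_{L²(𝕋²)}` holds for all
`u ∈ H²(𝕋²)` and `0 < h < h₀ = ε^{16+δ}` (encoded for trigonometric polynomials
`u = ∑_k d_k e^{2πik·x}`, with `(-h²Δ-1)u = ∑_k (4π²h²|k|²-1) d_k e^{2πik·x}`).
Then there is `C′` such that for every `u₀` with `u₀ = Π_{>h₀⁻¹}u₀`, i.e. every
trigonometric polynomial whose frequencies all satisfy `2π√(p²+q²) > h₀⁻¹`,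
`‖u₀‖²_{L²(𝕋²)} ≤ C′ε⁻⁸ ∫₀^{1/2π} ‖e^{itΔ}u₀‖²_{L²(Ω_ε)} dt`,
where `Ω_ε = B(0,ε)` and `e^{itΔ}u₀ = ∑_k c_k e^{2πik·x - 4π²i|k|²t}`. -/
theorem stmt17 (ε δ C : ℝ) (hε : 0 < ε) (hε1 : ε < 1) (hδ : 0 < δ) (hC : 0 < C)
    (hsc : ∀ (T : Finset (ℤ × ℤ)) (d : ℤ × ℤ → ℂ) (h : ℝ), 0 < h → h < ε^(16+δ) →
      Real.sqrt (∫ p in Set.Icc ((0:ℝ), (0:ℝ)) (1, 1),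
          ‖∑ k ∈ T, d k * Complex.exp (2*π*Complex.I*((k.1:ℝ)*p.1 + (k.2:ℝ)*p.2))‖^2)
        ≤ C / ε^4 * Real.sqrt (∫ p in {p : ℝ × ℝ | p.1^2 + p.2^2 < ε^2},
            ‖∑ k ∈ T, d k * Complex.exp (2*π*Complex.I*((k.1:ℝ)*p.1 + (k.2:ℝ)*p.2))‖^2)
          + C / (ε^2 * h^2) * Real.sqrt (∫ p in Set.Icc ((0:ℝ), (0:ℝ)) (1, 1),
            ‖∑ k ∈ T, ((4*π^2*h^2*((k.1:ℝ)^2+(k.2:ℝ)^2) - 1 : ℝ) : ℂ) * d k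
                * Complex.exp (2*π*Complex.I*((k.1:ℝ)*p.1 + (k.2:ℝ)*p.2))‖^2)) :
    ∃ C' > (0:ℝ), ∀ (S : Finset (ℤ × ℤ)) (c : ℤ × ℤ → ℂ),
      (∀ k ∈ S, 2*π*Real.sqrt ((k.1:ℝ)^2 + (k.2:ℝ)^2) > (ε^(16+δ))⁻¹) →
      (∫ p in Set.Icc ((0:ℝ), (0:ℝ)) (1, 1),
          ‖∑ k ∈ S, c k * Complex.exp (2*π*Complex.I*((k.1:ℝ)*p.1 + (k.2:ℝ)*p.2))‖^2)
        ≤ C' / ε^8 * ∫ t in (0:ℝ)..(1/(2*π)),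
            ∫ p in {p : ℝ × ℝ | p.1^2 + p.2^2 < ε^2},
              ‖∑ k ∈ S, c k * Complex.exp (2*π*Complex.I*((k.1:ℝ)*p.1 + (k.2:ℝ)*p.2)
                  - 4*π^2*((k.1:ℝ)^2+(k.2:ℝ)^2)*Complex.I*t)‖^2 := by
  refine ⟨2*π*C^2, by positivity, ?_⟩
  intro S c hfreq
  -- the observation ball, and integrability of continuous functions on it
  set Ω : Set (ℝ × ℝ) := {p : ℝ × ℝ | p.1^2 + p.2^2 < ε^2} with hΩ
  have hfinΩ : ∀ g : ℝ × ℝ → ℂ, Continuous g → IntegrableOn g Ω := by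
    intro g hg
    refine (hg.locallyIntegrable.integrableOn_isCompact
      (isCompact_Icc (a := ((-ε, -ε) : ℝ × ℝ)) (b := (ε, ε)))).mono_set ?_
    intro p hp
    simp only [hΩ, Set.mem_setOf_eq] at hp
    rw [Set.mem_Icc]
    refine ⟨⟨?_, ?_⟩, ?_, ?_⟩ <;>
      · simp only []
        nlinarith [sq_nonneg p.1, sq_nonneg p.2, sq_nonneg (p.1 + ε), sq_nonneg (p.1 - ε),
          sq_nonneg (p.2 + ε), sq_nonneg (p.2 - ε)]
  -- fibers of the frequency-squared map
  set M : Finset ℤ := S.image (fun k => k.1^2 + k.2^2) with hM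
  set g : ℤ → ℝ × ℝ → ℂ :=
    fun m p => ∑ k ∈ S.filter (fun k => k.1^2 + k.2^2 = m), c k * EE k p with hg
  have hgcont : ∀ m, Continuous (g m) :=
    fun m => continuous_finset_sum _ (fun k _ => continuous_const.mul (contEE k))
  -- pointwise regrouping of the solution
  have ptwise : ∀ (t : ℝ) (p : ℝ × ℝ),
      (∑ k ∈ S, c k * Complex.exp (2*π*Complex.I*((k.1:ℝ)*p.1 + (k.2:ℝ)*p.2)
          - 4*π^2*((k.1:ℝ)^2+(k.2:ℝ)^2)*Complex.I*t)) =
      ∑ m ∈ M, g m p * Complex.exp (-(4*π^2*(m:ℝ)*Complex.I*t)) := by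
    intro t p
    rw [← Finset.sum_fiberwise_of_maps_to
      (fun k hk => Finset.mem_image_of_mem (fun k => k.1^2 + k.2^2) hk)
      (fun k => c k * Complex.exp (2*π*Complex.I*((k.1:ℝ)*p.1 + (k.2:ℝ)*p.2)
          - 4*π^2*((k.1:ℝ)^2+(k.2:ℝ)^2)*Complex.I*t))]
    refine Finset.sum_congr rfl fun m _ => ?_
    rw [hg]
    simp only []
    rw [Finset.sum_mul]
    refine Finset.sum_congr rfl fun k hk => ?_
    have hkm : (k.1:ℝ)^2 + (k.2:ℝ)^2 = (m:ℝ) := by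
      have := (Finset.mem_filter.mp hk).2
      push_cast [← this]
      ring
    have hkc : (((k.1:ℝ):ℂ))^2 + (((k.2:ℝ):ℂ))^2 = ((m:ℝ):ℂ) := by exact_mod_cast hkm
    have key : Complex.exp (2*π*Complex.I*((k.1:ℝ)*p.1 + (k.2:ℝ)*p.2)
          - 4*π^2*((k.1:ℝ)^2+(k.2:ℝ)^2)*Complex.I*t) =
        EE k p * Complex.exp (-(4*π^2*(m:ℝ)*Complex.I*t)) := by
      unfold EE
      rw [← Complex.exp_add]
      congr 1
      rw [sub_eq_add_neg]
      congr 2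
      rw [hkc]
    rw [key, ← mul_assoc]
  have hRHS : (∫ t in (0:ℝ)..(1/(2*π)), ∫ p in Ω,
      ‖∑ k ∈ S, c k * Complex.exp (2*π*Complex.I*((k.1:ℝ)*p.1 + (k.2:ℝ)*p.2)
          - 4*π^2*((k.1:ℝ)^2+(k.2:ℝ)^2)*Complex.I*t)‖^2)
      = (1/(2*π)) * ∑ m ∈ M, ∫ p in Ω, ‖g m p‖^2 := by
    simp only [ptwise]
    exact timeOrth hfinΩ M g hgcont
  -- per-fiber semiclassical estimate with the resonant h
  have key : ∀ m ∈ M, (∑ k ∈ S.filter (fun k => k.1^2 + k.2^2 = m), ‖c k‖^2)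
      ≤ C^2/ε^8 * ∫ p in Ω, ‖g m p‖^2 := by
    intro m hm
    obtain ⟨k₀, hk₀S, hk₀m⟩ := Finset.mem_image.mp hm
    have hfr := hfreq k₀ hk₀S
    have hsq : ((k₀.1:ℝ)^2 + (k₀.2:ℝ)^2) = (m:ℝ) := by push_cast [← hk₀m]; ring
    rw [hsq] at hfr
    have hρpos : (0:ℝ) < ε^(16+δ) := Real.rpow_pos_of_pos hε _
    have hApos : (0:ℝ) < (ε^(16+δ))⁻¹ := by positivity
    have hBpos : (0:ℝ) < 2*π*Real.sqrt (m:ℝ) := lt_trans hApos hfr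
    have hspos : (0:ℝ) < Real.sqrt (m:ℝ) := by nlinarith [Real.pi_pos]
    have hm0 : (0:ℝ) < (m:ℝ) := Real.sqrt_pos.mp hspos
    set h : ℝ := (2*π*Real.sqrt (m:ℝ))⁻¹ with hh
    have hpos : 0 < h := inv_pos.mpr hBpos
    have hlt : h < ε^(16+δ) := by
      have := inv_strictAnti₀ hApos hfr
      rwa [inv_inv] at this
    have hsqB : (2*π*Real.sqrt (m:ℝ))^2 = 4*π^2*(m:ℝ) := by
      rw [mul_pow, mul_pow, Real.sq_sqrt hm0.le]; ring
    have hh2 : h^2 = 1/(4*π^2*(m:ℝ)) := by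
      rw [hh, inv_pow, hsqB, one_div]
    have coef0 : ∀ k ∈ S.filter (fun k => k.1^2 + k.2^2 = m),
        (4*π^2*h^2*((k.1:ℝ)^2+(k.2:ℝ)^2) - 1 : ℝ) = 0 := by
      intro k hk
      have hkm : ((k.1:ℝ)^2 + (k.2:ℝ)^2) = (m:ℝ) := by
        have := (Finset.mem_filter.mp hk).2
        push_cast [← this]; ring
      rw [hkm, hh2]
      have hπ : (π:ℝ) ≠ 0 := Real.pi_ne_zero
      field_simp
      ring
    have happ := hsc (S.filter (fun k => k.1^2 + k.2^2 = m)) c h hpos hlt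
    have hzero : (∫ p in Set.Icc ((0:ℝ), (0:ℝ)) (1, 1),
        ‖∑ k ∈ S.filter (fun k => k.1^2 + k.2^2 = m),
          ((4*π^2*h^2*((k.1:ℝ)^2+(k.2:ℝ)^2) - 1 : ℝ) : ℂ) * c k
            * Complex.exp (2*π*Complex.I*((k.1:ℝ)*p.1 + (k.2:ℝ)*p.2))‖^2) = 0 := by
      have hz : ∀ p : ℝ × ℝ, (∑ k ∈ S.filter (fun k => k.1^2 + k.2^2 = m),
          ((4*π^2*h^2*((k.1:ℝ)^2+(k.2:ℝ)^2) - 1 : ℝ) : ℂ) * c k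
            * Complex.exp (2*π*Complex.I*((k.1:ℝ)*p.1 + (k.2:ℝ)*p.2))) = 0 :=
        fun p => Finset.sum_eq_zero (fun k hk => by rw [coef0 k hk]; simp)
      rw [MeasureTheory.integral_congr_ae (Filter.Eventually.of_forall
        (fun p => by rw [hz p]; simp : ∀ p : ℝ × ℝ, _ = (0:ℝ)))]
      simp
    have pa : (∫ p in Set.Icc ((0:ℝ), (0:ℝ)) (1, 1),
        ‖∑ k ∈ S.filter (fun k => k.1^2 + k.2^2 = m),
          c k * Complex.exp (2*π*Complex.I*((k.1:ℝ)*p.1 + (k.2:ℝ)*p.2))‖^2)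
        = ∑ k ∈ S.filter (fun k => k.1^2 + k.2^2 = m), ‖c k‖^2 :=
      parseval (S.filter (fun k => k.1^2 + k.2^2 = m)) c
    rw [hzero, Real.sqrt_zero, mul_zero, add_zero, pa] at happ
    have hann : (0:ℝ) ≤ ∑ k ∈ S.filter (fun k => k.1^2 + k.2^2 = m), ‖c k‖^2 :=
      Finset.sum_nonneg (fun k _ => sq_nonneg _)
    have hbnn : (0:ℝ) ≤ ∫ p in Ω, ‖g m p‖^2 :=
      MeasureTheory.integral_nonneg (fun p => sq_nonneg _)
    have happ' : Real.sqrt (∑ k ∈ S.filter (fun k => k.1^2 + k.2^2 = m), ‖c k‖^2)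
        ≤ C/ε^4 * Real.sqrt (∫ p in Ω, ‖g m p‖^2) := happ
    calc (∑ k ∈ S.filter (fun k => k.1^2 + k.2^2 = m), ‖c k‖^2)
        = (Real.sqrt (∑ k ∈ S.filter (fun k => k.1^2 + k.2^2 = m), ‖c k‖^2))^2 :=
          (Real.sq_sqrt hann).symm
      _ ≤ (C/ε^4 * Real.sqrt (∫ p in Ω, ‖g m p‖^2))^2 :=
          pow_le_pow_left₀ (Real.sqrt_nonneg _) happ' 2
      _ = C^2/ε^8 * ∫ p in Ω, ‖g m p‖^2 := by
          rw [mul_pow, Real.sq_sqrt hbnn, div_pow]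
          norm_num [← pow_mul]
  calc (∫ p in Set.Icc ((0:ℝ), (0:ℝ)) (1, 1),
        ‖∑ k ∈ S, c k * Complex.exp (2*π*Complex.I*((k.1:ℝ)*p.1 + (k.2:ℝ)*p.2))‖^2)
      = ∑ k ∈ S, ‖c k‖^2 := parseval S c
    _ = ∑ m ∈ M, ∑ k ∈ S.filter (fun k => k.1^2 + k.2^2 = m), ‖c k‖^2 :=
        (Finset.sum_fiberwise_of_maps_to
          (fun k hk => Finset.mem_image_of_mem (fun k => k.1^2 + k.2^2) hk) _).symm
    _ ≤ ∑ m ∈ M, C^2/ε^8 * ∫ p in Ω, ‖g m p‖^2 := Finset.sum_le_sum key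
    _ = C^2/ε^8 * ∑ m ∈ M, ∫ p in Ω, ‖g m p‖^2 := (Finset.mul_sum _ _ _).symm
    _ = (2*π*C^2)/ε^8 * ((1/(2*π)) * ∑ m ∈ M, ∫ p in Ω, ‖g m p‖^2) := by
        have hπ : (π:ℝ) ≠ 0 := Real.pi_ne_zero
        field_simp
    _ = (2*π*C^2)/ε^8 * ∫ t in (0:ℝ)..(1/(2*π)), ∫ p in Ω,
          ‖∑ k ∈ S, c k * Complex.exp (2*π*Complex.I*((k.1:ℝ)*p.1 + (k.2:ℝ)*p.2)
              - 4*π^2*((k.1:ℝ)^2+(k.2:ℝ)^2)*Complex.I*t)‖^2 := by rw [hRHS]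
end
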